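/- (Tall skinny CSD) Let n = p + q with p ≥ q ≥ s and n ≥ s. Any n×s real matrix O with orthonormal columns (OᵀO = I_s) can be written as O = [[O_p C O_s], [O_q S O_s]] where O_p ∈ O(p), O_q ∈ O(q), O_s ∈ O(s), and C ∈ ℝ^{p×s}, S ∈ ℝ^{q×s} are (rectangular) diagonal matrices with entries cos θ_l and sin θ_l respectively, for angles θ_1, …, θ_s. -/

import Mathlib

/-!
Split `O` into its row blocks `X` and `Y`, so that `XᵀX + YᵀY = 1`. Diagonalising `XᵀX = V D Vᵀ`
with `V` orthogonal gives `(XV)ᵀ(XV) = D` and `(YV)ᵀ(YV) = 1 - D`; hence `0 ≤ D ≤ 1`, and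
`D = cos² θ`, `1 - D = sin² θ` for suitable angles. Finally, two matrices with the same Gram matrix
differ by a unitary factor on the left (extend the isometry `Bx ↦ Ax` from the range of `B` to the
whole space), so `XV = O_p C` and `YV = O_q S`, and `O_s = Vᵀ`.
-/

open Matrix

theorem LinearMap.exists_linearIsometry_comp_eq_of_norm_eq {𝕜 V W : Type*} [RCLike 𝕜]
    [AddCommGroup V] [Module 𝕜 V] [NormedAddCommGroup W] [InnerProductSpace 𝕜 W]
    [FiniteDimensional 𝕜 W] {f g : V →ₗ[𝕜] W} (h : ∀ x, ‖f x‖ = ‖g x‖) :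
    ∃ U : W →ₗᵢ[𝕜] W, ∀ x, U (g x) = f x := by
  have hker : LinearMap.ker g ≤ LinearMap.ker f := fun x hx => by
    rw [LinearMap.mem_ker, ← norm_eq_zero] at hx ⊢
    rwa [h]
  let L : LinearMap.range g →ₗ[𝕜] W :=
    (g.ker.liftQ f hker).comp g.quotKerEquivRange.symm.toLinearMap
  have hL : ∀ x, L ⟨g x, g.mem_range_self x⟩ = f x := fun x => by
    simp [L, LinearMap.quotKerEquivRange_symm_apply_image]
  let L' : LinearMap.range g →ₗᵢ[𝕜] W := ⟨L, by rintro ⟨_, x, rfl⟩; simp [hL, h]⟩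
  exact ⟨L'.extend, fun x => (L'.extend_apply ⟨g x, g.mem_range_self x⟩).trans (hL x)⟩

theorem Matrix.norm_toEuclideanLin_eq_of_conjTranspose_mul_self_eq {𝕜 m n : Type*} [RCLike 𝕜]
    [Fintype m] [DecidableEq m] [Fintype n] [DecidableEq n] {A B : Matrix m n 𝕜}
    (h : Aᴴ * A = Bᴴ * B) (x : EuclideanSpace 𝕜 n) :
    ‖toEuclideanLin A x‖ = ‖toEuclideanLin B x‖ := by
  have norm_sq (M : Matrix m n 𝕜) :
      (‖toEuclideanLin M x‖ ^ 2 : 𝕜) = inner 𝕜 x (toEuclideanLin (Mᴴ * M) x) := by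
    rw [toLpLin_mul_same, toEuclideanLin_conjTranspose_eq_adjoint, LinearMap.comp_apply,
      LinearMap.adjoint_inner_right, inner_self_eq_norm_sq_to_K]
  have hsq : (‖toEuclideanLin A x‖ ^ 2 : 𝕜) = ‖toEuclideanLin B x‖ ^ 2 := by
    rw [norm_sq, norm_sq, h]
  exact (pow_left_inj₀ (norm_nonneg _) (norm_nonneg _) two_ne_zero).1 (by exact_mod_cast hsq)

theorem Matrix.exists_mem_unitaryGroup_mul_eq_of_conjTranspose_mul_self_eq {𝕜 m n : Type*}
    [RCLike 𝕜] [Fintype m] [DecidableEq m] [Fintype n] [DecidableEq n] {A B : Matrix m n 𝕜}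
    (h : Aᴴ * A = Bᴴ * B) : ∃ U ∈ unitaryGroup m 𝕜, A = U * B := by
  obtain ⟨U, hU⟩ := LinearMap.exists_linearIsometry_comp_eq_of_norm_eq
    (norm_toEuclideanLin_eq_of_conjTranspose_mul_self_eq h)
  let b := EuclideanSpace.basisFun m 𝕜
  let M := LinearMap.toMatrix b.toBasis b.toBasis (U.toLinearIsometryEquiv rfl).toLinearEquiv
  refine ⟨M, LinearIsometryEquiv.toMatrix_mem_unitaryGroup _ b b, ?_⟩
  have hM : toEuclideanLin M = U.toLinearMap := by
    rw [toEuclideanLin_eq_toLin_orthonormal, toLin_toMatrix]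
    rfl
  apply toEuclideanLin.injective
  ext x : 1
  rw [toLpLin_mul_same, LinearMap.comp_apply, hM, LinearIsometry.coe_toLinearMap, hU]

def Matrix.rectDiagonal {R : Type*} [Zero R] (p : ℕ) {s : ℕ} (c : Fin s → R) :
    Matrix (Fin p) (Fin s) R :=
  of fun a b => if (a : ℕ) = b then c b else 0

theorem Matrix.rectDiagonal_transpose_mul_self {R : Type*} [CommSemiring R] {p s : ℕ}
    (hsp : s ≤ p) (c : Fin s → R) :
    (rectDiagonal p c)ᵀ * rectDiagonal p c = diagonal fun i => c i ^ 2 := by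
  ext b b'
  rw [mul_apply, Finset.sum_eq_single (Fin.castLE hsp b)]
  · by_cases hb : b = b' <;> simp [rectDiagonal, hb, sq, Fin.val_eq_val]
  · intro a _ ha
    have : (a : ℕ) ≠ b := fun h => ha (Fin.ext h)
    simp [rectDiagonal, this]
  · simp

theorem Real.exists_cos_sq_eq {d : ℝ} (h0 : 0 ≤ d) (h1 : d ≤ 1) : ∃ θ, cos θ ^ 2 = d :=
  ⟨arccos √d, by rw [cos_arccos (by linarith [sqrt_nonneg d]) (sqrt_le_one.2 h1), sq_sqrt h0]⟩

theorem Matrix.IsHermitian.exists_orthogonal_transpose_mul_mul_eq_diagonal {n : Type*} [Fintype n]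
    [DecidableEq n] {A : Matrix n n ℝ} (hA : A.IsHermitian) :
    ∃ V ∈ orthogonalGroup n ℝ, Vᵀ * A * V = diagonal hA.eigenvalues := by
  refine ⟨hA.eigenvectorUnitary, SetLike.coe_mem _, ?_⟩
  simpa [star_eq_conjTranspose] using hA.conjStarAlgAut_star_eigenvectorUnitary

theorem Matrix.transpose_mul_self_diag_nonneg {R m n : Type*} [Ring R] [LinearOrder R]
    [IsOrderedRing R] [Fintype m] (M : Matrix m n R) (i : n) : 0 ≤ (Mᵀ * M) i i :=
  Finset.sum_nonneg fun k _ => mul_self_nonneg (M k i)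

theorem Matrix.exists_orthogonal_cos_sin_of_transpose_mul_self_add_eq_one {m₁ m₂ n : Type*}
    [Fintype m₁] [Fintype m₂] [Fintype n] [DecidableEq n] {X : Matrix m₁ n ℝ} {Y : Matrix m₂ n ℝ}
    (h : Xᵀ * X + Yᵀ * Y = 1) :
    ∃ V ∈ orthogonalGroup n ℝ, ∃ θ : n → ℝ,
      (X * V)ᵀ * (X * V) = diagonal (fun i => Real.cos (θ i) ^ 2) ∧
      (Y * V)ᵀ * (Y * V) = diagonal (fun i => Real.sin (θ i) ^ 2) := by
  have hG : (Xᵀ * X).IsHermitian := by simpa using isHermitian_conjTranspose_mul_self X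
  obtain ⟨V, hV, hD⟩ := hG.exists_orthogonal_transpose_mul_mul_eq_diagonal
  set d := hG.eigenvalues
  have hX : (X * V)ᵀ * (X * V) = diagonal d := by
    simpa only [transpose_mul, Matrix.mul_assoc] using hD
  have hY : (Y * V)ᵀ * (Y * V) = 1 - diagonal d := by
    rw [← hD, ← (mem_orthogonalGroup_iff' n ℝ).1 hV, transpose_mul, Matrix.mul_assoc,
      ← Matrix.mul_assoc Yᵀ, eq_sub_of_add_eq' h]
    simp only [Matrix.mul_sub, Matrix.sub_mul, Matrix.one_mul, Matrix.mul_assoc]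
  have hθ : ∀ i, ∃ θ, Real.cos θ ^ 2 = d i := by
    intro i
    have h0 := (X * V).transpose_mul_self_diag_nonneg i
    have h1 := (Y * V).transpose_mul_self_diag_nonneg i
    rw [hX, diagonal_apply_eq] at h0
    rw [hY, sub_apply, one_apply_eq, diagonal_apply_eq, sub_nonneg] at h1
    exact Real.exists_cos_sq_eq h0 h1
  choose θ hθ using hθ
  refine ⟨V, hV, θ, ?_, ?_⟩
  · rw [hX]
    simp [hθ]
  · rw [hY, ← diagonal_one, diagonal_sub]
    simp [Real.sin_sq, hθ]

theorem tall_skinny_csd (p q s : ℕ) (hpq : q ≤ p) (hqs : s ≤ q)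
    (O : Matrix (Fin p ⊕ Fin q) (Fin s) ℝ) (hO : Oᵀ * O = 1) :
    ∃ (Op : Matrix (Fin p) (Fin p) ℝ) (Oq : Matrix (Fin q) (Fin q) ℝ)
      (Os : Matrix (Fin s) (Fin s) ℝ) (θ : Fin s → ℝ),
      Opᵀ * Op = 1 ∧ Oqᵀ * Oq = 1 ∧ Osᵀ * Os = 1 ∧
      (∀ i j, O (Sum.inl i) j =
        (Op * (Matrix.of fun (a : Fin p) (b : Fin s) =>
          if (a : ℕ) = (b : ℕ) then Real.cos (θ b) else 0) * Os) i j) ∧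
      (∀ i j, O (Sum.inr i) j =
        (Oq * (Matrix.of fun (a : Fin q) (b : Fin s) =>
          if (a : ℕ) = (b : ℕ) then Real.sin (θ b) else 0) * Os) i j) := by
  have hXY : O.toRows₁ᵀ * O.toRows₁ + O.toRows₂ᵀ * O.toRows₂ = 1 := by
    rw [← hO, ← fromCols_mul_fromRows, ← transpose_fromRows, fromRows_toRows]
  obtain ⟨V, hV, θ, hX, hY⟩ := exists_orthogonal_cos_sin_of_transpose_mul_self_add_eq_one hXY
  obtain ⟨Op, hOp, hXV⟩ := exists_mem_unitaryGroup_mul_eq_of_conjTranspose_mul_self_eq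
    (A := O.toRows₁ * V) (B := rectDiagonal p (Real.cos ∘ θ)) (by
      simp only [conjTranspose_eq_transpose_of_trivial, hX,
        rectDiagonal_transpose_mul_self (hqs.trans hpq)]
      rfl)
  obtain ⟨Oq, hOq, hYV⟩ := exists_mem_unitaryGroup_mul_eq_of_conjTranspose_mul_self_eq
    (A := O.toRows₂ * V) (B := rectDiagonal q (Real.sin ∘ θ)) (by
      simp only [conjTranspose_eq_transpose_of_trivial, hY, rectDiagonal_transpose_mul_self hqs]
      rfl)
  have hV' : Vᵀ ∈ orthogonalGroup (Fin s) ℝ := transpose_mem_unitaryGroup_iff.2 hV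
  have hcancel {m : Type} (Z : Matrix m (Fin s) ℝ) : Z = Z * V * Vᵀ := by
    rw [Matrix.mul_assoc, (mem_orthogonalGroup_iff _ _).1 hV, Matrix.mul_one]
  refine ⟨Op, Oq, Vᵀ, θ, (mem_orthogonalGroup_iff' _ _).1 hOp,
    (mem_orthogonalGroup_iff' _ _).1 hOq, (mem_orthogonalGroup_iff' _ _).1 hV',
    fun i j => ?_, fun i j => ?_⟩
  · show O.toRows₁ i j = _
    rw [hcancel O.toRows₁, hXV]
    rfl
  · show O.toRows₂ i j = _
    rw [hcancel O.toRows₂, hYV]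
    rfl
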